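/- Let g be absolutely continuous on [0,1] with SRVF q_g, and let fᵢ = cᵢ(g∘γᵢ) + eᵢ for constants cᵢ > 0, eᵢ ∈ ℝ, and γᵢ ∈ Γ, i = 1,…,n. With qᵢ the SRVF of fᵢ and s̄ = (1/n)Σᵢ√(cᵢ), the orbit [s̄ q_g] minimizes [q] ↦ Σᵢ d([qᵢ],[q])² over the quotient space L²/Γ, where d([q₁],[q₂]) = inf_{γ∈Γ} ‖q₁ − (q₂,γ)‖, i.e., for every q ∈ L², Σᵢ d([qᵢ],[q])² ≥ Σᵢ ‖√(cᵢ) q_g − s̄ q_g‖². -/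

import Mathlib

/-!
Warpings act on `L²` by isometries, so for every warping `δ` the reverse triangle inequality
gives `‖qᵢ - (q, δ)‖ ≥ |‖qᵢ‖ - ‖(q, δ)‖| = |√cᵢ ‖q_g‖ - ‖q‖|`, a bound that no longer depends
on `δ`. Summed over `i`, the squares of these bounds form a quadratic in the single scalar
`‖q‖`, minimized at the mean `s̄ ‖q_g‖` of the numbers `√cᵢ ‖q_g‖`, where the value is
`Σᵢ ‖√cᵢ q_g - s̄ q_g‖²`.
-/

open MeasureTheory Set intervalIntegral

noncomputable def Q (x : ℝ) : ℝ := x / Real.sqrt |x|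

/-- `γ` is an orientation-preserving diffeomorphism of `[0,1]` fixing the endpoints,
with (positive, continuous) derivative `γd`. -/
def IsWarping (γ γd : ℝ → ℝ) : Prop :=
  γ 0 = 0 ∧ γ 1 = 1 ∧ Set.MapsTo γ (Set.Icc 0 1) (Set.Icc 0 1) ∧
  (∀ t ∈ Set.Icc (0:ℝ) 1, HasDerivAt γ (γd t) t) ∧
  (∀ t ∈ Set.Icc (0:ℝ) 1, 0 < γd t) ∧
  ContinuousOn γd (Set.Icc 0 1)

/-- The action `(h, γ) = (h ∘ γ) √γ'` of a warping on square-root velocity functions. -/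
noncomputable def warpAction (h γ γd : ℝ → ℝ) (t : ℝ) : ℝ := h (γ t) * √(γd t)

namespace IsWarping

theorem id : IsWarping (fun t => t) (fun _ => 1) :=
  ⟨rfl, rfl, mapsTo_id _, fun t _ => hasDerivAt_id t, fun _ _ => one_pos, continuousOn_const⟩

variable {γ γd : ℝ → ℝ} (hγ : IsWarping γ γd)
include hγ

theorem hasDerivWithinAt {t : ℝ} (ht : t ∈ Icc (0:ℝ) 1) :
    HasDerivWithinAt γ (γd t) (Icc 0 1) t :=
  (hγ.2.2.2.1 t ht).hasDerivWithinAt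

theorem injOn : InjOn γ (Icc 0 1) := by
  refine (strictMonoOn_of_deriv_pos (convex_Icc 0 1)
    (fun t ht => (hγ.2.2.2.1 t ht).continuousAt.continuousWithinAt) fun t ht => ?_).injOn
  rw [interior_Icc] at ht
  rw [(hγ.2.2.2.1 t (Ioo_subset_Icc_self ht)).deriv]
  exact hγ.2.2.2.2.1 t (Ioo_subset_Icc_self ht)

theorem image_Icc : γ '' Icc 0 1 = Icc 0 1 := by
  refine (hγ.2.2.1.image_subset).antisymm ?_
  have := intermediate_value_Icc zero_le_one
    fun t ht => (hγ.2.2.2.1 t ht).continuousAt.continuousWithinAt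
  rwa [hγ.1, hγ.2.1] at this

theorem integrableOn_comp_iff {E : Type*} [NormedAddCommGroup E] [NormedSpace ℝ E] (F : ℝ → E) :
    IntegrableOn (fun t => γd t • F (γ t)) (Icc 0 1) ↔ IntegrableOn F (Icc 0 1) := by
  have := integrableOn_image_iff_integrableOn_abs_deriv_smul measurableSet_Icc
    (fun t ht => hγ.hasDerivWithinAt ht) hγ.injOn F
  rw [hγ.image_Icc] at this
  rw [this]
  refine integrableOn_congr_fun (fun t ht => ?_) measurableSet_Icc
  rw [abs_of_pos (hγ.2.2.2.2.1 t ht)]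

theorem setIntegral_comp {E : Type*} [NormedAddCommGroup E] [NormedSpace ℝ E] (F : ℝ → E) :
    ∫ t in Icc 0 1, γd t • F (γ t) = ∫ t in Icc 0 1, F t := by
  have := integral_image_eq_integral_abs_deriv_smul measurableSet_Icc
    (fun t ht => hγ.hasDerivWithinAt ht) hγ.injOn F
  rw [hγ.image_Icc] at this
  rw [this]
  refine setIntegral_congr_fun measurableSet_Icc fun t ht => ?_
  rw [abs_of_pos (hγ.2.2.2.2.1 t ht)]

theorem warpAction_sq_eqOn (h : ℝ → ℝ) :
    EqOn (fun t => warpAction h γ γd t ^ 2) (fun t => γd t • h (γ t) ^ 2) (Icc 0 1) := by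
  intro t ht
  simp only [warpAction, smul_eq_mul, mul_pow, Real.sq_sqrt (hγ.2.2.2.2.1 t ht).le]
  ring

theorem setIntegral_warpAction_sq (h : ℝ → ℝ) :
    ∫ t in Icc 0 1, warpAction h γ γd t ^ 2 = ∫ t in Icc 0 1, h t ^ 2 := by
  rw [setIntegral_congr_fun measurableSet_Icc (hγ.warpAction_sq_eqOn h)]
  exact hγ.setIntegral_comp fun t => h t ^ 2

theorem memLp_warpAction {h : ℝ → ℝ} (hh : MemLp h 2 (volume.restrict (Icc 0 1))) :
    MemLp (warpAction h γ γd) 2 (volume.restrict (Icc 0 1)) := by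
  have hpos := hγ.2.2.2.2.1
  -- `h ∘ γ` need not be measurable a priori; write `warpAction h γ γd` as
  -- `(γd • h ∘ γ) · (√γd / γd)`, an integrable function times a continuous one.
  have hint : IntegrableOn (fun t => γd t • h (γ t)) (Icc 0 1) :=
    (hγ.integrableOn_comp_iff h).2 (hh.integrable one_le_two)
  have hcont : ContinuousOn (fun t => √(γd t) / γd t) (Icc 0 1) :=
    hγ.2.2.2.2.2.sqrt.div hγ.2.2.2.2.2 fun t ht => (hpos t ht).ne'
  have hmeas : AEStronglyMeasurable (warpAction h γ γd) (volume.restrict (Icc 0 1)) := by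
    refine (hint.1.mul (hcont.aestronglyMeasurable measurableSet_Icc)).congr ?_
    filter_upwards [ae_restrict_mem measurableSet_Icc] with t ht
    have := (hpos t ht).ne'
    simp only [warpAction, Pi.mul_apply, smul_eq_mul]
    field_simp
  refine (memLp_two_iff_integrable_sq hmeas).2 ?_
  refine IntegrableOn.congr_fun ?_ (hγ.warpAction_sq_eqOn h).symm measurableSet_Icc
  exact (hγ.integrableOn_comp_iff fun t => h t ^ 2).2 hh.integrable_sq

end IsWarping

namespace MeasureTheory.MemLp

variable {α : Type*} [MeasurableSpace α] {μ : Measure α}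

lemma integral_sq_eq_norm_toLp_sq {f : α → ℝ} (hf : MemLp f 2 μ) :
    ∫ x, f x ^ 2 ∂μ = ‖hf.toLp f‖ ^ 2 := by
  rw [← real_inner_self_eq_norm_sq, L2.inner_def]
  refine integral_congr_ae ?_
  filter_upwards [hf.coeFn_toLp] with x hx
  simp [hx, sq]

lemma sq_sub_sqrt_integral_sq_le {u v : α → ℝ} (hu : MemLp u 2 μ) (hv : MemLp v 2 μ) :
    (√(∫ x, u x ^ 2 ∂μ) - √(∫ x, v x ^ 2 ∂μ)) ^ 2 ≤ ∫ x, (u x - v x) ^ 2 ∂μ := by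
  have huv : ∫ x, (u x - v x) ^ 2 ∂μ = ‖(hu.sub hv).toLp (u - v)‖ ^ 2 :=
    (hu.sub hv).integral_sq_eq_norm_toLp_sq
  rw [hu.integral_sq_eq_norm_toLp_sq, hv.integral_sq_eq_norm_toLp_sq, huv,
    Real.sqrt_sq (norm_nonneg _), Real.sqrt_sq (norm_nonneg _), toLp_sub hu hv, ← sq_abs]
  exact pow_le_pow_left₀ (abs_nonneg _) (abs_norm_sub_norm_le _ _) 2

end MeasureTheory.MemLp

open Finset in
lemma Finset.sum_sq_sub_mean_le {ι : Type*} (s : Finset ι) (x : ι → ℝ) (y : ℝ) :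
    ∑ i ∈ s, (x i - (∑ j ∈ s, x j) / #s) ^ 2 ≤ ∑ i ∈ s, (x i - y) ^ 2 := by
  have hsum : ∑ j ∈ s, x j = #s * ((∑ j ∈ s, x j) / #s) := by
    rcases s.eq_empty_or_nonempty with rfl | hs
    · simp
    · rw [mul_div_cancel₀ _ (by exact_mod_cast hs.card_pos.ne')]
  generalize (∑ j ∈ s, x j) / #s = m at hsum ⊢
  have : ∑ i ∈ s, (x i - y) ^ 2 = ∑ i ∈ s, (x i - m) ^ 2 + #s * (m - y) ^ 2 := by
    have h : ∀ i ∈ s, (x i - y) ^ 2 = (x i - m) ^ 2 + (2 * (m - y) * x i - (m ^ 2 - y ^ 2)) :=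
      fun i _ => by ring
    rw [sum_congr rfl h, sum_add_distrib, sum_sub_distrib, ← mul_sum, hsum, sum_const, nsmul_eq_mul]
    ring
  rw [this]
  exact le_add_of_nonneg_right (mul_nonneg (Nat.cast_nonneg _) (sq_nonneg _))

/-- The squared distance `d([u], [h])²` between the orbits of `u` and `h` in `L²/Γ`. -/
noncomputable def orbitDistSq (u h : ℝ → ℝ) : ℝ :=
  sInf {r : ℝ | ∃ δ δd : ℝ → ℝ, IsWarping δ δd ∧
    r = ∫ t in (0:ℝ)..1, (u t - warpAction h δ δd t) ^ 2}

theorem sq_sub_sqrt_le_orbitDistSq {u h : ℝ → ℝ} (hu : MemLp u 2 (volume.restrict (Icc 0 1)))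
    (hh : MemLp h 2 (volume.restrict (Icc 0 1))) :
    (√(∫ t in Icc 0 1, u t ^ 2) - √(∫ t in Icc 0 1, h t ^ 2)) ^ 2 ≤ orbitDistSq u h := by
  refine le_csInf ⟨_, _, _, IsWarping.id, rfl⟩ ?_
  rintro r ⟨δ, δd, hδ, rfl⟩
  rw [integral_of_le zero_le_one, ← integral_Icc_eq_integral_Ioc,
    ← hδ.setIntegral_warpAction_sq h]
  exact hu.sq_sub_sqrt_integral_sq_le (hδ.memLp_warpAction hh)

theorem karcher_mean_of_warped_signals_general (n : ℕ)
    (q_g : ℝ → ℝ) (hqg : MemLp q_g 2 (volume.restrict (Icc (0:ℝ) 1)))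
    (c : Fin n → ℝ)
    (γ γd : Fin n → ℝ → ℝ) (hγ : ∀ i, IsWarping (γ i) (γd i))
    (q : Fin n → ℝ → ℝ)
    (hq : ∀ i, ∀ t ∈ Icc (0:ℝ) 1,
      q i t = Real.sqrt (c i) * (q_g (γ i t) * Real.sqrt (γd i t)))
    (sbar : ℝ) (hsbar : sbar = (∑ i, Real.sqrt (c i)) / n) :
    ∀ qf : ℝ → ℝ, MemLp qf 2 (volume.restrict (Icc (0:ℝ) 1)) →
      ∑ i, sInf {r : ℝ | ∃ δ δd : ℝ → ℝ, IsWarping δ δd ∧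
          r = ∫ t in (0:ℝ)..1, (q i t - qf (δ t) * Real.sqrt (δd t))^2}
        ≥ ∑ i, ∫ t in (0:ℝ)..1, (Real.sqrt (c i) * q_g t - sbar * q_g t)^2 := by
  intro qf hqf
  set A := ∫ t in Icc (0:ℝ) 1, q_g t ^ 2
  have hA : 0 ≤ A := setIntegral_nonneg measurableSet_Icc fun t _ => sq_nonneg _
  have hqi : ∀ i, MemLp (q i) 2 (volume.restrict (Icc 0 1)) ∧
      ∫ t in Icc 0 1, q i t ^ 2 = (√(c i) * √A) ^ 2 := by
    intro i
    have hqi_eq : EqOn (q i) (fun t => √(c i) * warpAction q_g (γ i) (γd i) t) (Icc 0 1) := hq i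
    refine ⟨(((hγ i).memLp_warpAction hqg).const_mul _).ae_eq
      (Filter.EventuallyEq.symm ((ae_restrict_mem measurableSet_Icc).mono hqi_eq)), ?_⟩
    rw [setIntegral_congr_fun measurableSet_Icc fun t ht => by rw [hqi_eq ht]]
    simp only [mul_pow, MeasureTheory.integral_const_mul, (hγ i).setIntegral_warpAction_sq,
      Real.sq_sqrt hA, A]
  have hrhs : ∀ i, ∫ t in (0:ℝ)..1, (√(c i) * q_g t - sbar * q_g t) ^ 2
      = (√(c i) * √A - sbar * √A) ^ 2 := by
    intro i
    simp only [← sub_mul, mul_pow, MeasureTheory.integral_const_mul, Real.sq_sqrt hA,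
      integral_of_le zero_le_one, ← integral_Icc_eq_integral_Ioc, A]
  have hmean : sbar * √A = (∑ i, √(c i) * √A) / (Finset.univ : Finset (Fin n)).card := by
    rw [hsbar, ← Finset.sum_mul, Finset.card_univ, Fintype.card_fin, div_mul_eq_mul_div]
  rw [ge_iff_le]
  calc ∑ i, ∫ t in (0:ℝ)..1, (√(c i) * q_g t - sbar * q_g t) ^ 2
      = ∑ i, (√(c i) * √A - sbar * √A) ^ 2 := Finset.sum_congr rfl fun i _ => hrhs i
    _ ≤ ∑ i, (√(c i) * √A - √(∫ t in Icc 0 1, qf t ^ 2)) ^ 2 := by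
      rw [hmean]
      exact Finset.sum_sq_sub_mean_le _ _ _
    _ ≤ _ := Finset.sum_le_sum fun i _ => by
      have := sq_sub_sqrt_le_orbitDistSq (hqi i).1 hqf
      rwa [(hqi i).2, Real.sqrt_sq (by positivity)] at this

/-- Consistency of the Karcher mean (Theorem 1): let `g` have SRVF `q_g` and let
`fᵢ = cᵢ (g ∘ γᵢ) + eᵢ` with `cᵢ > 0`, so that the SRVF of `fᵢ` is
`qᵢ = √cᵢ (q_g ∘ γᵢ) √(γᵢ')`. With `s̄ = (1/n) Σᵢ √cᵢ`, the orbit `[s̄ q_g]` minimizes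
`[q] ↦ Σᵢ d([qᵢ],[q])²` where `d([q₁],[q₂]) = inf_γ ‖q₁ − (q₂,γ)‖`: for every `q ∈ L²`,
`Σᵢ d([qᵢ],[q])² ≥ Σᵢ ‖√cᵢ q_g − s̄ q_g‖²` (squared distances expressed as infima of
squared norms). -/
theorem karcher_mean_of_warped_signals (n : ℕ) (hn : 0 < n)
    (g q_g : ℝ → ℝ) (hqg : MemLp q_g 2 (volume.restrict (Icc (0:ℝ) 1)))
    (c : Fin n → ℝ) (hc : ∀ i, 0 < c i) (e : Fin n → ℝ)
    (γ γd : Fin n → ℝ → ℝ) (hγ : ∀ i, IsWarping (γ i) (γd i))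
    (f : Fin n → ℝ → ℝ) (hf : ∀ i, f i = fun t => c i * g (γ i t) + e i)
    (q : Fin n → ℝ → ℝ)
    (hq : ∀ i, ∀ t ∈ Icc (0:ℝ) 1,
      q i t = Real.sqrt (c i) * (q_g (γ i t) * Real.sqrt (γd i t)))
    (sbar : ℝ) (hsbar : sbar = (∑ i, Real.sqrt (c i)) / n) :
    ∀ qf : ℝ → ℝ, MemLp qf 2 (volume.restrict (Icc (0:ℝ) 1)) →
      ∑ i, sInf {r : ℝ | ∃ δ δd : ℝ → ℝ, IsWarping δ δd ∧
          r = ∫ t in (0:ℝ)..1, (q i t - qf (δ t) * Real.sqrt (δd t))^2}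
        ≥ ∑ i, ∫ t in (0:ℝ)..1, (Real.sqrt (c i) * q_g t - sbar * q_g t)^2 :=
  karcher_mean_of_warped_signals_general n q_g hqg c γ γd hγ q hq sbar hsbar
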